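/- For any non-negative real numbers u and v there exists a constant C > 0, depending only on u and v, such that for every n ∈ ℕ with n ≥ 2 and every x ∈ (0,1), Σ_{k=1}^{n−1} (k/n)^{−u} (1 − k/n)^{−v} p_{n,k}(x) ≤ C x^{−u} (1−x)^{−v}. -/

import Mathlib

open Real Set MeasureTheory

/-- The weight `w̄(x) = |x - ξ|^α`. -/
noncomputable def wbar (ξ α : ℝ) (x : ℝ) : ℝ := |x - ξ| ^ α

/-- Sup of `|g|` over `[0,1]`. -/
noncomputable def supIcc (g : ℝ → ℝ) : ℝ := ⨆ x : Set.Icc (0:ℝ) 1, |g x|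

/-- The weighted sup norm `‖w̄ f‖ = sup_{0 ≤ x ≤ 1} |w̄(x) f(x)|`. -/
noncomputable def nrmCw (ξ α : ℝ) (f : ℝ → ℝ) : ℝ := supIcc fun x => wbar ξ α x * f x

/-- Membership in `C_{w̄}`: continuous on `[0,1] \ {ξ}` and `w̄ f → 0` at `ξ`. -/
def MemCw (ξ α : ℝ) (f : ℝ → ℝ) : Prop :=
  ContinuousOn f (Set.Icc (0:ℝ) 1 \ {ξ}) ∧
  Filter.Tendsto (fun x => wbar ξ α x * f x)
    (nhdsWithin ξ (Set.Icc (0:ℝ) 1 \ {ξ})) (nhds 0)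

/-- Bernstein basis polynomial `p_{n,k}(x) = C(n,k) x^k (1-x)^{n-k}`. -/
noncomputable def bern (n k : ℕ) (x : ℝ) : ℝ :=
  (n.choose k : ℝ) * x ^ k * (1 - x) ^ (n - k)

/-- Bernstein operator `B_n(f,x) = Σ_{k=0}^n f(k/n) p_{n,k}(x)`. -/
noncomputable def Bop (n : ℕ) (f : ℝ → ℝ) (x : ℝ) : ℝ :=
  ∑ k ∈ Finset.range (n + 1), f ((k : ℝ) / n) * bern n k x

/-- The smooth cut-off function ψ. -/
noncomputable def psi (x : ℝ) : ℝ :=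
  if x ≤ 0 then 0 else if 1 ≤ x then 1 else 10 * x ^ 3 - 15 * x ^ 4 + 6 * x ^ 5

noncomputable def X1 (ξ : ℝ) (n : ℕ) : ℝ := (⌊n * ξ - 2 * Real.sqrt n⌋ : ℝ) / n
noncomputable def X2 (ξ : ℝ) (n : ℕ) : ℝ := (⌊n * ξ - Real.sqrt n⌋ : ℝ) / n
noncomputable def X3 (ξ : ℝ) (n : ℕ) : ℝ := (⌊n * ξ + Real.sqrt n⌋ : ℝ) / n
noncomputable def X4 (ξ : ℝ) (n : ℕ) : ℝ := (⌊n * ξ + 2 * Real.sqrt n⌋ : ℝ) / n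

/-- `n` is large enough that `0 < x1 < x2 < x3 < x4 < 1`. -/
def GoodN (ξ : ℝ) (n : ℕ) : Prop :=
  0 < X1 ξ n ∧ X1 ξ n < X2 ξ n ∧ X2 ξ n < X3 ξ n ∧ X3 ξ n < X4 ξ n ∧ X4 ξ n < 1

noncomputable def psib1 (ξ : ℝ) (n : ℕ) (x : ℝ) : ℝ := psi ((x - X1 ξ n) / (X2 ξ n - X1 ξ n))
noncomputable def psib2 (ξ : ℝ) (n : ℕ) (x : ℝ) : ℝ := psi ((x - X3 ξ n) / (X4 ξ n - X3 ξ n))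

/-- The linear function `P(f,x)` through `(x1, f(x1))` and `(x4, f(x4))`. -/
noncomputable def Pl (ξ : ℝ) (n : ℕ) (f : ℝ → ℝ) (x : ℝ) : ℝ :=
  (x - X4 ξ n) / (X1 ξ n - X4 ξ n) * f (X1 ξ n) +
    (X1 ξ n - x) / (X1 ξ n - X4 ξ n) * f (X4 ξ n)

/-- `F̄_n(f,x) = f(x)(1 - ψ̄1(x) + ψ̄2(x)) + ψ̄1(x)(1 - ψ̄2(x)) P(f,x)`. -/
noncomputable def Fbar (ξ : ℝ) (n : ℕ) (f : ℝ → ℝ) (x : ℝ) : ℝ :=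
  f x * (1 - psib1 ξ n x + psib2 ξ n x) +
    psib1 ξ n x * (1 - psib2 ξ n x) * Pl ξ n f x

/-- The modified Bernstein operator `B̄_n(f,x) = B_n(F̄_n(f), x)`. -/
noncomputable def Bbar (ξ : ℝ) (n : ℕ) (f : ℝ → ℝ) (x : ℝ) : ℝ := Bop n (Fbar ξ n f) x

noncomputable def phi (x : ℝ) : ℝ := Real.sqrt (x * (1 - x))

noncomputable def deltaN (n : ℕ) (x : ℝ) : ℝ := phi x + 1 / Real.sqrt n

/-- `ρ` is an admissible step-weight with exponents `β0, β1` and comparison constant `C0`. -/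
def Admissible (ρ : ℝ → ℝ) (β0 β1 C0 : ℝ) : Prop :=
  1 ≤ C0 ∧ 0 ≤ β0 ∧ 0 ≤ β1 ∧
    ∀ x ∈ Set.Ioo (0:ℝ) 1,
      C0⁻¹ * (x ^ β0 * (1 - x) ^ β1) ≤ ρ x ∧ ρ x ≤ C0 * (x ^ β0 * (1 - x) ^ β1)

/-- The weighted sup norm `sup_{0<x<1} |w̄(x) w2(x) f''(x)|`, where `w2` is the
second-order weight (e.g. `ρ²` or `φ^{2λ}`). -/
noncomputable def nrm2 (ξ α : ℝ) (w2 f : ℝ → ℝ) : ℝ :=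
  ⨆ x : Set.Ioo (0:ℝ) 1, |wbar ξ α x * w2 x * deriv (deriv f) x|

/-- Membership in the weighted Sobolev-type class: `f ∈ C_{w̄}`, `f` differentiable on
`(0,1)` with `f'` locally absolutely continuous there (encoded by the fundamental
theorem of calculus for `f'`), and `‖w̄ · w2 · f''‖ < ∞`. -/
def MemW2 (ξ α : ℝ) (w2 : ℝ → ℝ) (f : ℝ → ℝ) : Prop :=
  MemCw ξ α f ∧
  (∀ x ∈ Set.Ioo (0:ℝ) 1, DifferentiableAt ℝ f x) ∧
  (∀ a ∈ Set.Ioo (0:ℝ) 1, ∀ b ∈ Set.Ioo (0:ℝ) 1,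
    deriv f b - deriv f a = ∫ t in a..b, deriv (deriv f) t) ∧
  BddAbove (Set.range fun x : Set.Ioo (0:ℝ) 1 =>
    |wbar ξ α x * w2 x * deriv (deriv f) x|)

/-- The weighted modulus of smoothness `ω²_ρ(f,t)_{w̄}`. -/
noncomputable def omega2 (ξ α : ℝ) (ρ f : ℝ → ℝ) (t : ℝ) : ℝ :=
  sSup {y : ℝ | ∃ h x : ℝ, 0 < h ∧ h ≤ t ∧ x ∈ Set.Icc (0:ℝ) 1 ∧
    x + h * ρ x ∈ Set.Icc (0:ℝ) 1 ∧ x - h * ρ x ∈ Set.Icc (0:ℝ) 1 ∧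
    y = |wbar ξ α x * (f (x + h * ρ x) - 2 * f x + f (x - h * ρ x))|}

lemma bern_nonneg {n k : ℕ} {x : ℝ} (h0 : 0 ≤ x) (h1 : x ≤ 1) : 0 ≤ bern n k x := by
  unfold bern
  have : (0:ℝ) ≤ 1 - x := by linarith
  positivity
lemma bern_sum (n : ℕ) (x : ℝ) : ∑ k ∈ Finset.range (n+1), bern n k x = 1 := by
  have h := add_pow x (1-x) n
  have hx : x + (1-x) = 1 := by ring
  rw [hx, one_pow] at h
  rw [show (∑ k ∈ Finset.range (n+1), bern n k x)
      = ∑ k ∈ Finset.range (n+1), x ^ k * (1-x) ^ (n-k) * (n.choose k : ℝ) from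
    Finset.sum_congr rfl fun k _ => by unfold bern; ring]
  exact h.symm
lemma choose_prod (N n k : ℕ) :
    (∏ j ∈ Finset.range N, (k + j + 1)) * Nat.choose (n + N) (k + N) =
    (∏ j ∈ Finset.range N, (n + j + 1)) * Nat.choose n k := by
  induction N with
  | zero => simp
  | succ N ih =>
    rw [Finset.prod_range_succ, Finset.prod_range_succ]
    have h2 : (n + N + 1) * (n+N).choose (k+N) = (n+N+1).choose (k+N+1) * (k+N+1) :=
      Nat.add_one_mul_choose_eq (n + N) (k + N)
    calc (∏ j ∈ Finset.range N, (k + j + 1)) * (k + N + 1) * ((n + N + 1).choose (k + N + 1))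
        = (∏ j ∈ Finset.range N, (k + j + 1)) * ((n+N+1).choose (k+N+1) * (k+N+1)) := by
          ring
      _ = (∏ j ∈ Finset.range N, (k + j + 1)) * ((n + N + 1) * (n+N).choose (k+N)) := by rw [← h2]
      _ = (n+N+1) * ((∏ j ∈ Finset.range N, (k + j + 1)) * (n+N).choose (k+N)) := by ring
      _ = (n+N+1) * ((∏ j ∈ Finset.range N, (n + j + 1)) * n.choose k) := by rw [ih]
      _ = (∏ j ∈ Finset.range N, (n + j + 1)) * (n + N + 1) * n.choose k := by ring
lemma bern_shift (N n k : ℕ) (x : ℝ) (hk : k ≤ n) :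
    (∏ j ∈ Finset.range N, ((k:ℝ) + j + 1)) * bern (n + N) (k + N) x =
    (∏ j ∈ Finset.range N, ((n:ℝ) + j + 1)) * x ^ N * bern n k x := by
  unfold bern
  have h1 : n + N - (k + N) = n - k := by omega
  rw [h1, pow_add]
  have hc := choose_prod N n k
  have hcast : (∏ j ∈ Finset.range N, ((k:ℝ) + j + 1)) * ((n+N).choose (k+N) : ℝ) =
      (∏ j ∈ Finset.range N, ((n:ℝ) + j + 1)) * (n.choose k : ℝ) := by
    exact_mod_cast congrArg (Nat.cast : ℕ → ℝ) hc
  linear_combination (x ^ k * x ^ N * (1-x)^(n-k)) * hcast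
lemma term_bound (N n k : ℕ) {x : ℝ} (hx0 : 0 < x) (hx1 : x < 1)
    (hk1 : 1 ≤ k) (hkn : k ≤ n) :
    ((n:ℝ)/k) ^ N * bern n k x ≤
      (Nat.factorial (N+1) : ℝ) * x⁻¹ ^ N * bern (n+N) (k+N) x := by
  have hk0 : (0:ℝ) < k := by exact_mod_cast hk1
  have hn0 : (0:ℝ) < n := lt_of_lt_of_le hk0 (by exact_mod_cast hkn)
  have hB : 0 ≤ bern (n+N) (k+N) x := bern_nonneg hx0.le hx1.le
  have hE := bern_shift N n k x hkn
  set F : ℝ := (Nat.factorial (N+1) : ℝ) with hF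
  set Pn : ℝ := ∏ j ∈ Finset.range N, ((n:ℝ) + j + 1) with hPn
  set Pk : ℝ := ∏ j ∈ Finset.range N, ((k:ℝ) + j + 1) with hPk
  have hPnpos : (0:ℝ) < Pn := Finset.prod_pos (fun j _ => by positivity)
  have hkey : (n:ℝ) ^ N * Pk ≤ F * (k:ℝ) ^ N * Pn := by
    have h1 : (n:ℝ) ^ N ≤ Pn := by
      calc (n:ℝ) ^ N = ∏ _j ∈ Finset.range N, (n:ℝ) := by
            rw [Finset.prod_const, Finset.card_range]
        _ ≤ Pn := Finset.prod_le_prod (fun j _ => hn0.le) (fun j _ => by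
            have : (0:ℝ) ≤ (j:ℝ) := by positivity
            linarith)
    have h2 : Pk ≤ (k:ℝ) ^ N * F := by
      have hstep : Pk ≤ ∏ j ∈ Finset.range N, ((k:ℝ) * (j + 2)) := by
        apply Finset.prod_le_prod
        · intro j _; positivity
        · intro j _
          have hk1' : (1:ℝ) ≤ (k:ℝ) := by exact_mod_cast hk1
          have hj : (0:ℝ) ≤ (j:ℝ) := by positivity
          nlinarith
      have hfac : ∏ j ∈ Finset.range N, ((j:ℝ) + 2) = F := by
        rw [hF, ← Finset.prod_range_add_one_eq_factorial (N+1),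
          Finset.prod_range_succ' (fun j => j + 1) N]
        push_cast
        simp only [mul_one]
        exact Finset.prod_congr rfl fun j _ => by ring
      calc Pk ≤ ∏ j ∈ Finset.range N, ((k:ℝ) * (j + 2)) := hstep
        _ = (k:ℝ) ^ N * ∏ j ∈ Finset.range N, ((j:ℝ) + 2) := by
            rw [Finset.prod_mul_distrib, Finset.prod_const, Finset.card_range]
        _ = (k:ℝ) ^ N * F := by rw [hfac]
    calc (n:ℝ) ^ N * Pk ≤ Pn * ((k:ℝ)^N * F) :=
          mul_le_mul h1 h2 (by positivity) hPnpos.le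
      _ = F * (k:ℝ) ^ N * Pn := by ring
  have hfac : (0:ℝ) < (k:ℝ)^N * x^N * Pn := by positivity
  apply le_of_mul_le_mul_left _ hfac
  calc (k:ℝ)^N * x^N * Pn * (((n:ℝ)/k) ^ N * bern n k x)
      = (n:ℝ)^N * (Pn * x^N * bern n k x) := by
        rw [div_pow]; field_simp
    _ = (n:ℝ)^N * (Pk * bern (n+N) (k+N) x) := by rw [← hE]
    _ = ((n:ℝ)^N * Pk) * bern (n+N) (k+N) x := by ring
    _ ≤ (F * (k:ℝ)^N * Pn) * bern (n+N) (k+N) x :=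
        mul_le_mul_of_nonneg_right hkey hB
    _ = (k:ℝ)^N * x^N * Pn * (F * x⁻¹ ^ N * bern (n+N) (k+N) x) := by
        rw [inv_pow]; field_simp
lemma sum_bern_le_one (m : ℕ) (s : Finset ℕ) (hs : s ⊆ Finset.range (m+1))
    {x : ℝ} (hx0 : 0 ≤ x) (hx1 : x ≤ 1) : ∑ k ∈ s, bern m k x ≤ 1 := by
  calc ∑ k ∈ s, bern m k x ≤ ∑ k ∈ Finset.range (m+1), bern m k x :=
        Finset.sum_le_sum_of_subset_of_nonneg hs
          (fun k _ _ => bern_nonneg hx0 hx1)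
    _ = 1 := bern_sum m x
lemma sumL1 (N n : ℕ) {x : ℝ} (hx0 : 0 < x) (hx1 : x < 1) :
    ∑ k ∈ Finset.Ico 1 n, ((n:ℝ)/k) ^ N * bern n k x ≤
      (Nat.factorial (N+1) : ℝ) * x⁻¹ ^ N := by
  calc ∑ k ∈ Finset.Ico 1 n, ((n:ℝ)/k) ^ N * bern n k x
      ≤ ∑ k ∈ Finset.Ico 1 n,
          (Nat.factorial (N+1) : ℝ) * x⁻¹ ^ N * bern (n+N) (k+N) x := by
        refine Finset.sum_le_sum fun k hk => ?_
        rw [Finset.mem_Ico] at hk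
        exact term_bound N n k hx0 hx1 hk.1 (le_of_lt hk.2)
    _ = (Nat.factorial (N+1) : ℝ) * x⁻¹ ^ N *
          ∑ k ∈ Finset.Ico 1 n, bern (n+N) (k+N) x := by
        rw [Finset.mul_sum]
    _ ≤ (Nat.factorial (N+1) : ℝ) * x⁻¹ ^ N * 1 := by
        refine mul_le_mul_of_nonneg_left ?_ (by positivity)
        have hmap : ∑ k ∈ Finset.Ico 1 n, bern (n+N) (k+N) x
            = ∑ j ∈ Finset.Ico (1+N) (n+N), bern (n+N) j x := by
          rw [← Finset.map_add_right_Ico, Finset.sum_map]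
          rfl
        rw [hmap]
        refine sum_bern_le_one (n+N) _ ?_ hx0.le hx1.le
        intro j hj
        rw [Finset.mem_Ico] at hj
        rw [Finset.mem_range]
        omega
    _ = (Nat.factorial (N+1) : ℝ) * x⁻¹ ^ N := by rw [mul_one]
lemma bern_reflect (n k : ℕ) (hk : k ≤ n) (x : ℝ) :
    bern n k x = bern n (n-k) (1-x) := by
  unfold bern
  rw [Nat.sub_sub_self hk, Nat.choose_symm hk, sub_sub_cancel]
  ring
lemma sumL2 (N n : ℕ) {x : ℝ} (hx0 : 0 < x) (hx1 : x < 1) :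
    ∑ k ∈ Finset.Ico 1 n, ((n:ℝ)/((n:ℝ)-(k:ℝ))) ^ N * bern n k x ≤
      (Nat.factorial (N+1) : ℝ) * (1-x)⁻¹ ^ N := by
  have h1 : (0:ℝ) < 1 - x := by linarith
  have h2 : 1 - x < 1 := by linarith
  have hre : ∑ k ∈ Finset.Ico 1 n, ((n:ℝ)/((n:ℝ)-(k:ℝ))) ^ N * bern n k x
      = ∑ k ∈ Finset.Ico 1 n, ((n:ℝ)/k) ^ N * bern n k (1-x) := by
    refine Finset.sum_nbij' (fun k => n - k) (fun k => n - k) ?_ ?_ ?_ ?_ ?_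
    · intro k hk; simp only [Finset.mem_Ico] at hk ⊢; omega
    · intro k hk; simp only [Finset.mem_Ico] at hk ⊢; omega
    · intro k hk; simp only [Finset.mem_Ico] at hk; show n - (n - k) = k; omega
    · intro k hk; simp only [Finset.mem_Ico] at hk; show n - (n - k) = k; omega
    · intro k hk
      rw [Finset.mem_Ico] at hk
      have hcast : ((n:ℝ) - (k:ℝ)) = ((n - k : ℕ) : ℝ) := by
        rw [Nat.cast_sub (le_of_lt hk.2)]
      rw [hcast, bern_reflect n k (le_of_lt hk.2) x]
  rw [hre]
  exact sumL1 N n h1 h2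

/-- `Σ_{k=1}^{n−1} (k/n)^{−u} (1−k/n)^{−v} p_{n,k}(x) ≤ C x^{−u}(1−x)^{−v}`. -/
theorem stmt13 (u v : ℝ) (hu : 0 ≤ u) (hv : 0 ≤ v) :
    ∃ C > 0, ∀ n : ℕ, 2 ≤ n → ∀ x ∈ Set.Ioo (0:ℝ) 1,
      ∑ k ∈ Finset.Ico 1 n,
          ((k : ℝ) / n) ^ (-u) * (1 - (k : ℝ) / n) ^ (-v) * bern n k x ≤
        C * x ^ (-u) * (1 - x) ^ (-v) := by
  set N : ℕ := ⌊u + v⌋₊ + 1 with hN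
  have hNR : (0:ℝ) < N := by positivity
  have huv : u + v < N := by
    have := Nat.lt_floor_add_one (u + v)
    push_cast [hN]
    push_cast at this
    linarith
  set α : ℝ := u / N with hαdef
  set β : ℝ := v / N with hβdef
  set γ : ℝ := 1 - α - β with hγdef
  have hα : 0 ≤ α := div_nonneg hu hNR.le
  have hβ : 0 ≤ β := div_nonneg hv hNR.le
  have hαβ : α + β ≤ 1 := by
    rw [hαdef, hβdef, ← add_div]
    exact le_of_lt ((div_lt_one hNR).mpr huv)
  have hγ : 0 ≤ γ := by rw [hγdef]; linarith
  have hNα : (N:ℝ) * α = u := by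
    rw [hαdef]; field_simp
  have hNβ : (N:ℝ) * β = v := by
    rw [hβdef]; field_simp
  set F : ℝ := (Nat.factorial (N+1) : ℝ) with hF
  have hF1 : (1:ℝ) ≤ F := by
    rw [hF]; exact_mod_cast Nat.one_le_iff_ne_zero.mpr (Nat.factorial_ne_zero _)
  have hF0 : (0:ℝ) < F := lt_of_lt_of_le one_pos hF1
  refine ⟨F, hF0, ?_⟩
  intro n hn x hx
  obtain ⟨hx0, hx1⟩ := hx
  have hn0 : (0:ℝ) < n := by positivity
  set s : Finset ℕ := Finset.Ico 1 n with hs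
  set A : ℕ → ℝ := fun k => ((n:ℝ)/k) ^ N with hA
  set B : ℕ → ℝ := fun k => ((n:ℝ)/((n:ℝ)-(k:ℝ))) ^ N with hB
  have hk_facts : ∀ k ∈ s, (0:ℝ) < k ∧ (k:ℝ) < n := by
    intro k hk
    rw [hs, Finset.mem_Ico] at hk
    constructor
    · exact_mod_cast hk.1
    · exact_mod_cast hk.2
  have hApos : ∀ k ∈ s, 0 < A k := by
    intro k hk
    obtain ⟨h1, h2⟩ := hk_facts k hk
    rw [hA]; positivity
  have hBpos : ∀ k ∈ s, 0 < B k := by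
    intro k hk
    obtain ⟨h1, h2⟩ := hk_facts k hk
    have : (0:ℝ) < (n:ℝ) - k := by linarith
    rw [hB]; positivity
  have hbernpos : ∀ k ∈ s, 0 < bern n k x := by
    intro k hk
    rw [hs, Finset.mem_Ico] at hk
    have hc : 0 < n.choose k := Nat.choose_pos (le_of_lt hk.2)
    have hc' : (0:ℝ) < n.choose k := by exact_mod_cast hc
    have h1x : (0:ℝ) < 1 - x := by linarith
    unfold bern; positivity
  set S1 : ℝ := ∑ k ∈ s, A k * bern n k x with hS1def
  set S2 : ℝ := ∑ k ∈ s, B k * bern n k x with hS2def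
  set T : ℝ := ∑ k ∈ s, bern n k x with hTdef
  have hs_ne : s.Nonempty := ⟨1, by rw [hs, Finset.mem_Ico]; omega⟩
  have hS1 : 0 < S1 := Finset.sum_pos
    (fun k hk => mul_pos (hApos k hk) (hbernpos k hk)) hs_ne
  have hS2 : 0 < S2 := Finset.sum_pos
    (fun k hk => mul_pos (hBpos k hk) (hbernpos k hk)) hs_ne
  have hT : 0 < T := Finset.sum_pos (fun k hk => hbernpos k hk) hs_ne
  have hT1 : T ≤ 1 := by
    rw [hTdef]
    refine sum_bern_le_one n s ?_ hx0.le hx1.le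
    intro k hk; rw [hs, Finset.mem_Ico] at hk; rw [Finset.mem_range]; omega
  have hS1le : S1 ≤ F * x⁻¹ ^ N := sumL1 N n hx0 hx1
  have hS2le : S2 ≤ F * (1-x)⁻¹ ^ N := sumL2 N n hx0 hx1
  -- rewrite each term of the target sum
  have hterm : ∀ k ∈ s, ((k:ℝ)/n) ^ (-u) * (1 - (k:ℝ)/n) ^ (-v) * bern n k x
      = A k ^ α * B k ^ β * bern n k x := by
    intro k hk
    obtain ⟨hk0, hkn⟩ := hk_facts k hk
    have hnk : (0:ℝ) < (n:ℝ) - k := by linarith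
    have e1 : ((k:ℝ)/n) ^ (-u) = A k ^ α := by
      have hAk : A k = ((n:ℝ)/k) ^ N := rfl
      rw [hAk]
      have : ((k:ℝ)/n) = ((n:ℝ)/k)⁻¹ := by rw [inv_div]
      rw [this, Real.inv_rpow (by positivity), ← Real.rpow_neg (by positivity),
        neg_neg, ← Real.rpow_natCast ((n:ℝ)/k) N, ← Real.rpow_mul (by positivity), hNα]
    have e2 : (1 - (k:ℝ)/n) ^ (-v) = B k ^ β := by
      have hBk : B k = ((n:ℝ)/((n:ℝ)-(k:ℝ))) ^ N := rfl
      rw [hBk]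
      have h12 : 1 - (k:ℝ)/n = (((n:ℝ)-k)/n) := by field_simp
      have : (((n:ℝ)-k)/n) = ((n:ℝ)/((n:ℝ)-k))⁻¹ := by rw [inv_div]
      rw [h12, this, Real.inv_rpow (by positivity), ← Real.rpow_neg (by positivity),
        neg_neg, ← Real.rpow_natCast ((n:ℝ)/((n:ℝ)-k)) N, ← Real.rpow_mul (by positivity), hNβ]
    rw [e1, e2]
  rw [Finset.sum_congr rfl hterm]
  -- Hölder via AM-GM
  set D : ℝ := S1 ^ α * S2 ^ β * T ^ γ with hD
  have hS1a : (0:ℝ) < S1 ^ α := Real.rpow_pos_of_pos hS1 α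
  have hS2b : (0:ℝ) < S2 ^ β := Real.rpow_pos_of_pos hS2 β
  have hTg : (0:ℝ) < T ^ γ := Real.rpow_pos_of_pos hT γ
  have hD0 : 0 < D := by rw [hD]; positivity
  have key : ∀ k ∈ s, A k ^ α * B k ^ β * bern n k x ≤
      D * ((α * (A k / S1) + β * (B k / S2) + γ * (1 / T)) * bern n k x) := by
    intro k hk
    have hg := Real.geom_mean_le_arith_mean3_weighted hα hβ hγ
      (div_nonneg (hApos k hk).le hS1.le) (div_nonneg (hBpos k hk).le hS2.le)
      (by positivity : (0:ℝ) ≤ 1 / T) (by rw [hγdef]; ring)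
    have hId : A k ^ α * B k ^ β =
        D * ((A k / S1) ^ α * (B k / S2) ^ β * (1 / T) ^ γ) := by
      rw [Real.div_rpow (hApos k hk).le hS1.le, Real.div_rpow (hBpos k hk).le hS2.le,
        Real.div_rpow zero_le_one hT.le, Real.one_rpow, hD]
      field_simp
    calc A k ^ α * B k ^ β * bern n k x
        = D * ((A k / S1) ^ α * (B k / S2) ^ β * (1 / T) ^ γ) * bern n k x := by
          rw [← hId]
      _ ≤ D * (α * (A k / S1) + β * (B k / S2) + γ * (1 / T)) * bern n k x := by
          apply mul_le_mul_of_nonneg_right _ (hbernpos k hk).le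
          exact mul_le_mul_of_nonneg_left hg hD0.le
      _ = D * ((α * (A k / S1) + β * (B k / S2) + γ * (1 / T)) * bern n k x) := by ring
  have hsum1 : ∑ k ∈ s, (α * (A k / S1) + β * (B k / S2) + γ * (1 / T)) * bern n k x = 1 := by
    have : ∀ k ∈ s, (α * (A k / S1) + β * (B k / S2) + γ * (1 / T)) * bern n k x
        = (α / S1) * (A k * bern n k x) + ((β / S2) * (B k * bern n k x)
          + (γ / T) * bern n k x) := by
      intro k _; ring
    rw [Finset.sum_congr rfl this, Finset.sum_add_distrib, Finset.sum_add_distrib,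
      ← Finset.mul_sum, ← Finset.mul_sum, ← Finset.mul_sum, ← hS1def, ← hS2def, ← hTdef]
    field_simp
    ring
  have hG : ∑ k ∈ s, A k ^ α * B k ^ β * bern n k x ≤ D := by
    calc ∑ k ∈ s, A k ^ α * B k ^ β * bern n k x
        ≤ ∑ k ∈ s, D * ((α * (A k / S1) + β * (B k / S2) + γ * (1 / T)) * bern n k x) :=
          Finset.sum_le_sum key
      _ = D * ∑ k ∈ s, (α * (A k / S1) + β * (B k / S2) + γ * (1 / T)) * bern n k x := by
          rw [Finset.mul_sum]
      _ = D := by rw [hsum1, mul_one]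
  refine le_trans hG ?_
  -- now bound D
  have hb1 : S1 ^ α ≤ F ^ α * x ^ (-u) := by
    calc S1 ^ α ≤ (F * x⁻¹ ^ N) ^ α := Real.rpow_le_rpow hS1.le hS1le hα
      _ = F ^ α * (x⁻¹ ^ N) ^ α := Real.mul_rpow hF0.le (by positivity)
      _ = F ^ α * x ^ (-u) := by
          rw [← Real.rpow_natCast x⁻¹ N, ← Real.rpow_mul (by positivity), hNα,
            Real.inv_rpow hx0.le, ← Real.rpow_neg hx0.le]
  have hb2 : S2 ^ β ≤ F ^ β * (1-x) ^ (-v) := by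
    have h1x : (0:ℝ) < 1 - x := by linarith
    calc S2 ^ β ≤ (F * (1-x)⁻¹ ^ N) ^ β := Real.rpow_le_rpow hS2.le hS2le hβ
      _ = F ^ β * ((1-x)⁻¹ ^ N) ^ β := Real.mul_rpow hF0.le (by positivity)
      _ = F ^ β * (1-x) ^ (-v) := by
          rw [← Real.rpow_natCast (1-x)⁻¹ N, ← Real.rpow_mul (by positivity), hNβ,
            Real.inv_rpow h1x.le, ← Real.rpow_neg h1x.le]
  have hb3 : T ^ γ ≤ 1 := Real.rpow_le_one hT.le hT1 hγ
  have hxneg : (0:ℝ) < x ^ (-u) := Real.rpow_pos_of_pos hx0 _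
  have h1xneg : (0:ℝ) < (1-x) ^ (-v) := Real.rpow_pos_of_pos (by linarith) _
  have hFab : F ^ α * F ^ β ≤ F := by
    rw [← Real.rpow_add hF0]
    calc F ^ (α + β) ≤ F ^ (1:ℝ) := Real.rpow_le_rpow_of_exponent_le hF1 hαβ
      _ = F := Real.rpow_one F
  calc D ≤ (F ^ α * x ^ (-u)) * (F ^ β * (1-x) ^ (-v)) * 1 := by
        rw [hD]
        apply mul_le_mul (mul_le_mul hb1 hb2 hS2b.le (by positivity)) hb3 hTg.le
          (by positivity)
    _ = (F ^ α * F ^ β) * (x ^ (-u) * (1-x) ^ (-v)) := by ring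
    _ ≤ F * (x ^ (-u) * (1-x) ^ (-v)) := by
        apply mul_le_mul_of_nonneg_right hFab (by positivity)
    _ = F * x ^ (-u) * (1-x) ^ (-v) := by ring
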